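/- arXiv:2403.16734 — 2 statements merged into one kernel-verified Lean document; each statement's English description precedes it below -/
import Mathlib

section
/- Let R ∈ ℝ^{n×n} with R ≠ 0, and suppose there is a set S ⊆ {1, …, n} of cardinality k < n such that R e_i = 0 for every i ∈ S, where e_1, …, e_n is the standard basis of ℝⁿ. Let s be a standard basis vector maximizing ‖R e_i‖ over i ∈ {1, …, n}. Then sᵀ Rᵀ R s / (sᵀ s) ≥ ‖R‖_F² / (n − k), and hence the update R' = R − (R s sᵀ Rᵀ / (sᵀ Rᵀ R s)) R satisfies ‖R'‖_F² ≤ (1 − 1/(n − k)) ‖R‖_F². -/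
open Matrix MeasureTheory ProbabilityTheory Finset

/-- Euclidean norm of a vector in ℝⁿ. -/
noncomputable def enorm' {n : ℕ} (v : Fin n → ℝ) : ℝ := Real.sqrt (∑ i, (v i) ^ 2)

/-- Frobenius norm of a real n×n matrix. -/
noncomputable def frob {n : ℕ} (A : Matrix (Fin n) (Fin n) ℝ) : ℝ :=
  Real.sqrt (∑ i, ∑ j, (A i j) ^ 2)

/-- Spectral (ℓ₂ operator) norm of a real n×n matrix. -/
noncomputable def opNorm' {n : ℕ} (A : Matrix (Fin n) (Fin n) ℝ) : ℝ :=
  ‖Matrix.toEuclideanCLM (𝕜 := ℝ) A‖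

/-- The AAA update: AAA(B,J,s) = B + ((J−B) s sᵀ (J−B)ᵀ / (sᵀ(J−B)ᵀ(J−B)s)) (J−B)
if (J−B)s ≠ 0, and B otherwise. -/
noncomputable def AAAupd {n : ℕ} (B J : Matrix (Fin n) (Fin n) ℝ) (s : Fin n → ℝ) :
    Matrix (Fin n) (Fin n) ℝ :=
  if (J - B).mulVec s = 0 then B
  else B + (((J - B).mulVec s) ⬝ᵥ ((J - B).mulVec s))⁻¹ •
      (Matrix.vecMulVec ((J - B).mulVec s) ((J - B).mulVec s) * (J - B))

/-- `s` is a standard basis vector maximizing ‖R e_i‖ over the standard basis. -/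
noncomputable def IsGreedy {n : ℕ} (R : Matrix (Fin n) (Fin n) ℝ) (s : Fin n → ℝ) : Prop :=
  ∃ i : Fin n, s = Pi.single i 1 ∧
    ∀ j : Fin n, enorm' (R.mulVec (Pi.single j 1)) ≤ enorm' (R.mulVec (Pi.single i 1))

/-- `P` is the orthogonal-projection matrix onto the subspace `V` of ℝⁿ
(symmetric, idempotent, range `V`, identity on `V`). -/
def IsOrthProj {n : ℕ} (P : Matrix (Fin n) (Fin n) ℝ) (V : Submodule ℝ (Fin n → ℝ)) : Prop :=
  P.IsSymm ∧ P * P = P ∧ (∀ v, P.mulVec v ∈ V) ∧ (∀ v ∈ V, P.mulVec v = v)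

/-- Standard Gaussian measure on ℝⁿ: the n-fold product of N(0,1). -/
noncomputable def stdGaussianPi (n : ℕ) : MeasureTheory.Measure (Fin n → ℝ) :=
  MeasureTheory.Measure.pi fun _ => ProbabilityTheory.gaussianReal 0 1

/-!
With `u = R s`, the update is `R' = (I - u uᵀ / ‖u‖²) R`, an orthogonal projection applied to
`R`, so `‖R'‖_F² = ‖R‖_F² - ‖uᵀ R‖² / ‖u‖²`. By Cauchy–Schwarz against `s`, and since
`uᵀ R s = ‖u‖²`, the removed mass is at least the Rayleigh quotient `‖R s‖² / ‖s‖²`. For the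
greedy column `s = e_i`, this quotient is the largest squared column norm, which dominates the
average `‖R‖_F² / (n - k)` over the `n - k` columns that may be nonzero.
-/

theorem dotProduct_sq_le_dotProduct_self_mul {ι : Type*} [Fintype ι] (v w : ι → ℝ) :
    (v ⬝ᵥ w) ^ 2 ≤ (v ⬝ᵥ v) * (w ⬝ᵥ w) := by
  simpa only [dotProduct, sq] using Finset.sum_mul_sq_le_sq_mul_sq univ v w

theorem dotProduct_transpose_mul_mulVec {m ι α : Type*} [Fintype m] [Fintype ι]
    [CommSemiring α] (R : Matrix m ι α) (s : ι → α) :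
    s ⬝ᵥ ((Rᵀ * R) *ᵥ s) = (R *ᵥ s) ⬝ᵥ (R *ᵥ s) := by
  rw [← mulVec_mulVec, dotProduct_mulVec, vecMul_transpose]

/-- The cases `q = 0` and `b = 0` hold through the junk values `0⁻¹ = 0` and `x / 0 = 0`. -/
theorem div_le_inv_mul_of_sq_le_mul {q a b : ℝ} (hq : 0 ≤ q) (ha : 0 ≤ a) (hb : 0 ≤ b)
    (h : q ^ 2 ≤ a * b) : q / b ≤ q⁻¹ * a := by
  rcases hq.eq_or_lt with rfl | hq
  · simp
  rcases hb.eq_or_lt with rfl | hb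
  · simp only [div_zero]; positivity
  rw [div_le_iff₀ hb, inv_mul_eq_div, div_mul_eq_mul_div, le_div_iff₀ hq]
  nlinarith

theorem enorm'_sq {n : ℕ} (v : Fin n → ℝ) : enorm' v ^ 2 = v ⬝ᵥ v := by
  rw [enorm', Real.sq_sqrt (by positivity)]
  simp only [dotProduct, sq]

theorem enorm'_le_enorm'_iff {n : ℕ} {v w : Fin n → ℝ} :
    enorm' v ≤ enorm' w ↔ v ⬝ᵥ v ≤ w ⬝ᵥ w := by
  rw [← enorm'_sq, ← enorm'_sq]
  exact (pow_le_pow_iff_left₀ (Real.sqrt_nonneg _) (Real.sqrt_nonneg _) two_ne_zero).symm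

theorem frob_sq_eq_sum_col {n : ℕ} (A : Matrix (Fin n) (Fin n) ℝ) :
    frob A ^ 2 = ∑ j, A.col j ⬝ᵥ A.col j := by
  rw [frob, Real.sq_sqrt (by positivity), Finset.sum_comm]
  simp only [dotProduct, col_apply, sq]

theorem frob_sq_sub_inv_smul_vecMulVec_mul {n : ℕ} (R : Matrix (Fin n) (Fin n) ℝ)
    (u : Fin n → ℝ) :
    frob (R - (u ⬝ᵥ u)⁻¹ • (vecMulVec u u * R)) ^ 2 =
      frob R ^ 2 - (u ⬝ᵥ u)⁻¹ * (u ᵥ* R ⬝ᵥ u ᵥ* R) := by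
  set q := u ⬝ᵥ u
  set w := u ᵥ* R
  have hcol : ∀ j, (R - q⁻¹ • (vecMulVec u u * R)).col j = R.col j - (q⁻¹ * w j) • u := by
    intro j; ext l
    simp only [vecMulVec_mul, col_apply, Matrix.sub_apply, Matrix.smul_apply, vecMulVec_apply,
      Pi.sub_apply, Pi.smul_apply, smul_eq_mul, w]
    ring
  have hw : ∀ j, u ⬝ᵥ R.col j = w j := fun j => by
    simp only [w, vecMul, dotProduct, col_apply]
  have hqq : q⁻¹ ^ 2 * q = q⁻¹ := by
    rcases eq_or_ne q 0 with hq | hq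
    · simp [hq]
    · field_simp
  rw [frob_sq_eq_sum_col, frob_sq_eq_sum_col, dotProduct, Finset.mul_sum,
    ← Finset.sum_sub_distrib]
  refine Finset.sum_congr rfl fun j _ => ?_
  rw [hcol, sub_dotProduct, dotProduct_sub, dotProduct_sub, smul_dotProduct, dotProduct_smul,
    dotProduct_smul, smul_dotProduct, dotProduct_comm (R.col j) u, hw]
  simp only [smul_eq_mul]
  linear_combination (w j) ^ 2 * hqq

theorem frob_sq_sub_projection_le {n : ℕ} (R : Matrix (Fin n) (Fin n) ℝ) (s : Fin n → ℝ) :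
    frob (R - (s ⬝ᵥ ((Rᵀ * R) *ᵥ s))⁻¹ • (vecMulVec (R *ᵥ s) (R *ᵥ s) * R)) ^ 2 ≤
      frob R ^ 2 - s ⬝ᵥ ((Rᵀ * R) *ᵥ s) / (s ⬝ᵥ s) := by
  rw [dotProduct_transpose_mul_mulVec, frob_sq_sub_inv_smul_vecMulVec_mul, sub_le_sub_iff_left]
  have hcs := dotProduct_sq_le_dotProduct_self_mul ((R *ᵥ s) ᵥ* R) s
  rw [← dotProduct_mulVec] at hcs
  exact div_le_inv_mul_of_sq_le_mul (dotProduct_self_star_nonneg _)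
    (dotProduct_self_star_nonneg _) (dotProduct_self_star_nonneg _) hcs

theorem IsGreedy.frob_sq_le {n : ℕ} {R : Matrix (Fin n) (Fin n) ℝ} {s : Fin n → ℝ}
    (hs : IsGreedy R s) (S : Finset (Fin n)) (hS : ∀ i ∈ S, R *ᵥ Pi.single i 1 = 0) :
    frob R ^ 2 ≤ ((n : ℝ) - #S) * (s ⬝ᵥ ((Rᵀ * R) *ᵥ s) / (s ⬝ᵥ s)) := by
  obtain ⟨i, rfl, hmax⟩ := hs
  have hS_col : ∀ j ∈ S, R.col j ⬝ᵥ R.col j = 0 := fun j hj => by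
    rw [← mulVec_single_one, hS j hj, zero_dotProduct]
  have hcol_le : ∀ j ∈ Sᶜ, R.col j ⬝ᵥ R.col j ≤ R.col i ⬝ᵥ R.col i := fun j _ => by
    simpa only [mulVec_single_one] using enorm'_le_enorm'_iff.mp (hmax j)
  have hcard : ((#Sᶜ : ℕ) : ℝ) = n - #S := by
    rw [card_compl, Fintype.card_fin,
      Nat.cast_sub (S.card_le_univ.trans_eq (Fintype.card_fin n))]
  rw [dotProduct_transpose_mul_mulVec, mulVec_single_one, single_dotProduct,
    Pi.single_eq_same, mul_one, div_one, frob_sq_eq_sum_col, ← Finset.sum_compl_add_sum S,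
    Finset.sum_eq_zero hS_col, add_zero, ← hcard, ← nsmul_eq_mul]
  exact Finset.sum_le_card_nsmul _ _ _ hcol_le

theorem stmt_11_general {n : ℕ} (R : Matrix (Fin n) (Fin n) ℝ)
    (S : Finset (Fin n)) (k : ℕ) (hcard : S.card = k)
    (hSzero : ∀ i ∈ S, R.mulVec (Pi.single i 1) = 0)
    (s : Fin n → ℝ) (hs : IsGreedy R s)
    (R' : Matrix (Fin n) (Fin n) ℝ)
    (hR' : R' = R - (s ⬝ᵥ ((Rᵀ * R).mulVec s))⁻¹ •
      (Matrix.vecMulVec (R.mulVec s) (R.mulVec s) * R)) :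
    frob R ^ 2 / ((n : ℝ) - k) ≤ (s ⬝ᵥ ((Rᵀ * R).mulVec s)) / (s ⬝ᵥ s) ∧
    frob R' ^ 2 ≤ (1 - 1 / ((n : ℝ) - k)) * frob R ^ 2 := by
  subst hcard hR'
  have hnk : (0 : ℝ) ≤ n - #S :=
    sub_nonneg.mpr (by exact_mod_cast S.card_le_univ.trans_eq (Fintype.card_fin n))
  have hrayleigh : 0 ≤ s ⬝ᵥ ((Rᵀ * R) *ᵥ s) / (s ⬝ᵥ s) := by
    rw [dotProduct_transpose_mul_mulVec]
    exact div_nonneg (dotProduct_self_star_nonneg _) (dotProduct_self_star_nonneg _)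
  have hmean : frob R ^ 2 / (n - #S) ≤ s ⬝ᵥ ((Rᵀ * R) *ᵥ s) / (s ⬝ᵥ s) :=
    div_le_of_le_mul₀ hnk hrayleigh (by linarith [hs.frob_sq_le S hSzero])
  refine ⟨hmean, ?_⟩
  calc _ ≤ frob R ^ 2 - s ⬝ᵥ ((Rᵀ * R) *ᵥ s) / (s ⬝ᵥ s) :=
        frob_sq_sub_projection_le R s
    _ ≤ frob R ^ 2 - frob R ^ 2 / (n - #S) := by linarith
    _ = (1 - 1 / ((n : ℝ) - #S)) * frob R ^ 2 := by ring

theorem stmt_11 {n : ℕ} (R : Matrix (Fin n) (Fin n) ℝ) (hR : R ≠ 0)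
    (S : Finset (Fin n)) (k : ℕ) (hcard : S.card = k) (hk : k < n)
    (hSzero : ∀ i ∈ S, R.mulVec (Pi.single i 1) = 0)
    (s : Fin n → ℝ) (hs : IsGreedy R s)
    (R' : Matrix (Fin n) (Fin n) ℝ)
    (hR' : R' = R - (s ⬝ᵥ ((Rᵀ * R).mulVec s))⁻¹ •
      (Matrix.vecMulVec (R.mulVec s) (R.mulVec s) * R)) :
    frob R ^ 2 / ((n : ℝ) - k) ≤ (s ⬝ᵥ ((Rᵀ * R).mulVec s)) / (s ⬝ᵥ s) ∧
    frob R' ^ 2 ≤ (1 - 1 / ((n : ℝ) - k)) * frob R ^ 2 :=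
  stmt_11_general R S k hcard hSzero s hs R' hR'
end

section
/- Let B, J, A ∈ ℝ^{n×n}, let s be a random vector distributed according to the standard Gaussian measure on ℝⁿ, and let B' = AAA(B, J, s). Then E[‖B' − A‖_F] ≤ (1 − 1/(2n)) ‖B − A‖_F + (2 − 1/(2n)) ‖J − A‖_F. -/
open Matrix MeasureTheory ProbabilityTheory Finset

/-!
Put `R = J - B` and `u = R s`. Then `J - AAA(B, J, s) = R - u uᵀ R / |u|²` is `R` with the
component along `u` removed from every column, so
`‖J - B'‖_F² = ‖R‖_F² - |Rᵀu|² / |u|² ≤ ‖R‖_F² - |Rs|² / |s|²`,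
the inequality being Cauchy–Schwarz applied to `|u|² = ⟨Rᵀu, s⟩`. The tangent-line bound
`√(a² - b) ≤ a - b / (2a)` makes this linear in `|Rs|² / |s|²`, whose mean is `‖R‖_F² / n`: for
i.i.d. symmetric coordinates without an atom at `0`, sign flips and permutations of the
coordinates give `E[s sᵀ / |s|²] = I / n`. Hence `E‖J - B'‖_F ≤ (1 - 1/(2n)) ‖J - B‖_F`, and the
triangle inequality through `J` gives the bound.
-/

section DotProduct

variable {ι : Type*} [Fintype ι]

lemma dotProduct_self_nonneg (v : ι → ℝ) : 0 ≤ v ⬝ᵥ v :=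
  Finset.sum_nonneg fun i _ => mul_self_nonneg (v i)

lemma dotProduct_self_pos {v : ι → ℝ} (hv : v ≠ 0) : 0 < v ⬝ᵥ v :=
  (dotProduct_self_nonneg v).lt_of_ne (Ne.symm (dotProduct_self_eq_zero.not.mpr hv))

lemma dotProduct_sq_le (v w : ι → ℝ) : (v ⬝ᵥ w) ^ 2 ≤ (v ⬝ᵥ v) * (w ⬝ᵥ w) := by
  simpa only [dotProduct, ← sq] using Finset.sum_mul_sq_le_sq_mul_sq Finset.univ v w

end DotProduct

section RankOneCorrection

variable {m p : Type*} [Fintype m] [Fintype p]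

lemma sum_sq_sub_vecMulVec_vecMul (R : Matrix m p ℝ) {u : m → ℝ} (hu : u ⬝ᵥ u ≠ 0) :
    ∑ i, ∑ j, (R - (u ⬝ᵥ u)⁻¹ • vecMulVec u (u ᵥ* R)) i j ^ 2
      = ∑ i, ∑ j, R i j ^ 2 - (u ᵥ* R) ⬝ᵥ (u ᵥ* R) / (u ⬝ᵥ u) := by
  set c := (u ⬝ᵥ u)⁻¹
  set w := u ᵥ* R
  have hentry : ∀ i j, (R - c • vecMulVec u w) i j ^ 2
      = R i j ^ 2 - 2 * c * (w j * (u i * R i j)) + c ^ 2 * (u i * u i) * (w j * w j) := by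
    intro i j
    simp only [Matrix.sub_apply, Matrix.smul_apply, vecMulVec_apply, smul_eq_mul]
    ring
  have hcross : ∑ i, ∑ j, w j * (u i * R i j) = w ⬝ᵥ w := by
    rw [Finset.sum_comm]
    simp only [← Finset.mul_sum]
    rfl
  simp only [hentry, Finset.sum_add_distrib, Finset.sum_sub_distrib, ← Finset.mul_sum, hcross]
  rw [← Finset.sum_mul, ← Finset.mul_sum]
  change _ - _ + c ^ 2 * (u ⬝ᵥ u) * (w ⬝ᵥ w) = _
  simp only [c]
  field_simp
  ring

lemma dotProduct_mulVec_self_sq_le (R : Matrix m p ℝ) (s : p → ℝ) :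
    (R *ᵥ s ⬝ᵥ R *ᵥ s) ^ 2 ≤ ((R *ᵥ s) ᵥ* R ⬝ᵥ (R *ᵥ s) ᵥ* R) * (s ⬝ᵥ s) := by
  conv_lhs => rw [dotProduct_mulVec]
  exact dotProduct_sq_le _ _

lemma dotProduct_mulVec_self_eq (R : Matrix m p ℝ) (s : p → ℝ) :
    R *ᵥ s ⬝ᵥ R *ᵥ s = s ⬝ᵥ (Rᵀ * R) *ᵥ s := by
  rw [← mulVec_mulVec, dotProduct_mulVec s Rᵀ, vecMul_transpose]

end RankOneCorrection

lemma le_sub_div_of_sq_le_sq_sub {x a b : ℝ} (hx : 0 ≤ x) (ha : 0 < a) (h : x ^ 2 ≤ a ^ 2 - b) :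
    x ≤ a - b / (2 * a) := by
  obtain ⟨c, rfl⟩ : ∃ c, b = 2 * a * c := ⟨b / (2 * a), by field_simp⟩
  rw [mul_div_cancel_left₀ c (by positivity)]
  have hca : c ≤ a := by nlinarith [sq_nonneg x]
  exact (pow_le_pow_iff_left₀ hx (by linarith) two_ne_zero).1 (by nlinarith [sq_nonneg c])

section Frobenius

variable {n : ℕ}

section

attribute [local instance] Matrix.frobeniusSeminormedAddCommGroup

lemma frob_eq_norm (A : Matrix (Fin n) (Fin n) ℝ) : frob A = ‖A‖ := by
  simp only [frob, Matrix.frobenius_norm_def, Real.sqrt_eq_rpow, Real.norm_eq_abs, Real.rpow_two,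
    sq_abs]

lemma frob_sub_le (X Y : Matrix (Fin n) (Fin n) ℝ) : frob (X - Y) ≤ frob X + frob Y := by
  simpa only [frob_eq_norm] using norm_sub_le X Y

end

lemma frob_nonneg (A : Matrix (Fin n) (Fin n) ℝ) : 0 ≤ frob A := Real.sqrt_nonneg _

lemma frob_sq (A : Matrix (Fin n) (Fin n) ℝ) : frob A ^ 2 = ∑ i, ∑ j, A i j ^ 2 :=
  Real.sq_sqrt (by positivity)

lemma frob_sq_eq_trace (R : Matrix (Fin n) (Fin n) ℝ) : frob R ^ 2 = (Rᵀ * R).trace := by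
  rw [frob_sq]
  simp only [Matrix.trace, Matrix.diag_apply, Matrix.mul_apply, Matrix.transpose_apply, sq]
  exact Finset.sum_comm

lemma frob_sq_sub_smul_vecMulVec_mul_le (R : Matrix (Fin n) (Fin n) ℝ) {s : Fin n → ℝ}
    (hs : R *ᵥ s ≠ 0) :
    frob (R - (R *ᵥ s ⬝ᵥ R *ᵥ s)⁻¹ • (vecMulVec (R *ᵥ s) (R *ᵥ s) * R)) ^ 2
      ≤ frob R ^ 2 - (R *ᵥ s ⬝ᵥ R *ᵥ s) / (s ⬝ᵥ s) := by
  set u := R *ᵥ s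
  have hu : 0 < u ⬝ᵥ u := dotProduct_self_pos hs
  have hs' : 0 < s ⬝ᵥ s := dotProduct_self_pos fun h => hs (by simp [u, h])
  rw [frob_sq, frob_sq, vecMulVec_mul, sum_sq_sub_vecMulVec_vecMul R hu.ne']
  refine sub_le_sub_left ?_ _
  rw [div_le_div_iff₀ hs' hu, ← sq]
  exact dotProduct_mulVec_self_sq_le R s

-- For `(J - B) *ᵥ s = 0` this still holds, because `(0 ⬝ᵥ 0)⁻¹ = 0`.
lemma sub_AAAupd (B J : Matrix (Fin n) (Fin n) ℝ) (s : Fin n → ℝ) :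
    J - AAAupd B J s = (J - B) - ((J - B) *ᵥ s ⬝ᵥ (J - B) *ᵥ s)⁻¹ •
      (vecMulVec ((J - B) *ᵥ s) ((J - B) *ᵥ s) * (J - B)) := by
  unfold AAAupd
  split_ifs with hs
  · simp [hs]
  · abel

lemma frob_sub_AAAupd_le (B J : Matrix (Fin n) (Fin n) ℝ) (s : Fin n → ℝ) :
    frob (J - AAAupd B J s)
      ≤ frob (J - B) - ((J - B) *ᵥ s ⬝ᵥ (J - B) *ᵥ s) / (s ⬝ᵥ s) / (2 * frob (J - B)) := by
  set R := J - B
  by_cases hs : R *ᵥ s = 0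
  · simp [sub_AAAupd, R, hs]
  have hproj := frob_sq_sub_smul_vecMulVec_mul_le R hs
  have hq : 0 < (R *ᵥ s ⬝ᵥ R *ᵥ s) / (s ⬝ᵥ s) :=
    div_pos (dotProduct_self_pos hs) (dotProduct_self_pos fun h => hs (by simp [h]))
  have hR : 0 < frob R := by
    have h0 := (sq_nonneg _).trans hproj
    exact (frob_nonneg R).lt_of_ne' fun h => by rw [h] at h0; linarith
  rw [sub_AAAupd]
  exact le_sub_div_of_sq_le_sq_sub (frob_nonneg _) hR hproj

lemma frob_AAAupd_sub_le (B J A : Matrix (Fin n) (Fin n) ℝ) (s : Fin n → ℝ) :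
    frob (AAAupd B J s - A) ≤ frob (J - A) +
      (frob (J - B) - ((J - B) *ᵥ s ⬝ᵥ (J - B) *ᵥ s) / (s ⬝ᵥ s) / (2 * frob (J - B))) := by
  rw [← sub_sub_sub_cancel_left A (AAAupd B J s) J]
  exact (frob_sub_le _ _).trans (add_le_add le_rfl (frob_sub_AAAupd_le B J s))

end Frobenius

section SecondMoment

variable {ι : Type*} [Fintype ι] (μ : Measure ℝ)

lemma abs_mul_div_dotProduct_self_le_one (s : ι → ℝ) (j k : ι) : |s j * s k / (s ⬝ᵥ s)| ≤ 1 := by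
  rcases (dotProduct_self_nonneg s).eq_or_lt with h | h
  · simp [← h]
  have hle : ∀ i, s i * s i ≤ s ⬝ᵥ s := fun i =>
    Finset.single_le_sum (f := fun i => s i * s i) (fun i _ => mul_self_nonneg _) (mem_univ i)
  rw [abs_div, abs_of_pos h, div_le_one h, abs_mul]
  nlinarith [hle j, hle k, abs_mul_abs_self (s j), abs_mul_abs_self (s k), abs_nonneg (s j),
    abs_nonneg (s k)]

lemma integrable_mul_div_dotProduct_self [IsFiniteMeasure μ] (j k : ι) :
    Integrable (fun s => s j * s k / (s ⬝ᵥ s)) (Measure.pi fun _ : ι => μ) :=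
  .of_bound (by fun_prop : Measurable fun s : ι → ℝ => s j * s k / (s ⬝ᵥ s)).aestronglyMeasurable 1
    (ae_of_all _ fun s => abs_mul_div_dotProduct_self_le_one s j k)

lemma integral_mul_div_dotProduct_self_of_ne [SigmaFinite μ] [μ.IsNegInvariant] {j k : ι}
    (hjk : j ≠ k) : ∫ s, s j * s k / (s ⬝ᵥ s) ∂(Measure.pi fun _ => μ) = 0 := by
  classical
  let e : ι → ℝ ≃ᵐ ℝ := fun i => if i = j then MeasurableEquiv.neg ℝ else MeasurableEquiv.refl ℝ
  have hflip : MeasurePreserving (MeasurableEquiv.piCongrRight e)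
      (Measure.pi fun _ => μ) (Measure.pi fun _ => μ) :=
    measurePreserving_pi _ _ fun i => by
      by_cases hi : i = j
      · simpa [e, hi] using Measure.measurePreserving_neg μ
      · simpa [e, hi] using MeasurePreserving.id μ
  have hodd : ∀ s : ι → ℝ, let t := MeasurableEquiv.piCongrRight e s;
      t j * t k / (t ⬝ᵥ t) = -(s j * s k / (s ⬝ᵥ s)) := by
    intro s t
    have ht : ∀ i, t i = if i = j then -s i else s i := fun i => by
      show e i (s i) = _
      by_cases hi : i = j <;> simp [e, hi]
    have hnorm : t ⬝ᵥ t = s ⬝ᵥ s :=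
      Finset.sum_congr rfl fun i _ => by rw [ht]; split_ifs <;> ring
    rw [hnorm, ht, ht, if_pos rfl, if_neg hjk.symm, neg_mul, neg_div]
  have := hflip.integral_comp' (fun s => s j * s k / (s ⬝ᵥ s))
  simp only [hodd, integral_neg] at this
  linarith

lemma ae_dotProduct_self_ne_zero [SigmaFinite μ] [Nonempty ι] (h0 : μ {0} = 0) :
    ∀ᵐ s ∂(Measure.pi fun _ : ι => μ), s ⬝ᵥ s ≠ 0 := by
  obtain ⟨j⟩ := ‹Nonempty ι›
  filter_upwards [measure_eq_zero_iff_ae_notMem.1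
    (Measure.pi_eval_preimage_null (fun _ => μ) (i := j) h0)] with s hs hss
  exact hs (congrFun (dotProduct_self_eq_zero.1 hss) j)

lemma integral_mul_self_div_dotProduct_self_eq [SigmaFinite μ] (j k : ι) :
    ∫ s, s j * s j / (s ⬝ᵥ s) ∂(Measure.pi fun _ => μ)
      = ∫ s, s k * s k / (s ⬝ᵥ s) ∂(Measure.pi fun _ => μ) := by
  classical
  let e := Equiv.swap j k
  let T := MeasurableEquiv.piCongrLeft (fun _ : ι => ℝ) e
  have hswap : MeasurePreserving T (Measure.pi fun _ => μ) (Measure.pi fun _ => μ) :=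
    measurePreserving_piCongrLeft (fun _ : ι => μ) e
  have hT : ∀ s i, T s (e i) = s i := fun s i =>
    MeasurableEquiv.piCongrLeft_apply_apply (β := fun _ => ℝ) e s i
  have hnorm : ∀ s, T s ⬝ᵥ T s = s ⬝ᵥ s := fun s => by
    rw [dotProduct, ← Equiv.sum_comp e]
    exact Finset.sum_congr rfl fun i _ => by rw [hT]
  have hj : ∀ s, T s j = s k := fun s => by rw [← Equiv.swap_apply_right j k, hT]
  have := hswap.integral_comp' (fun s => s j * s j / (s ⬝ᵥ s))
  simp only [hnorm, hj] at this
  exact this.symm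

lemma integral_mul_self_div_dotProduct_self [IsProbabilityMeasure μ] (h0 : μ {0} = 0) (j : ι) :
    ∫ s, s j * s j / (s ⬝ᵥ s) ∂(Measure.pi fun _ => μ) = (Fintype.card ι : ℝ)⁻¹ := by
  have : Nonempty ι := ⟨j⟩
  have hsum : ∑ k : ι, ∫ s, s k * s k / (s ⬝ᵥ s) ∂(Measure.pi fun _ => μ) = 1 := by
    have hae : ∀ᵐ s ∂(Measure.pi fun _ : ι => μ), ∑ k, s k * s k / (s ⬝ᵥ s) = 1 :=
      (ae_dotProduct_self_ne_zero μ h0).mono fun s hs => by rw [← Finset.sum_div]; exact div_self hs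
    rw [← integral_finsetSum _ fun k _ => integrable_mul_div_dotProduct_self μ k k,
      integral_congr_ae hae]
    simp
  simp only [← integral_mul_self_div_dotProduct_self_eq μ j, Finset.sum_const, card_univ,
    nsmul_eq_mul] at hsum
  exact eq_inv_of_mul_eq_one_right hsum

lemma dotProduct_mulVec_div_dotProduct_self (M : Matrix ι ι ℝ) (s : ι → ℝ) :
    s ⬝ᵥ M *ᵥ s / (s ⬝ᵥ s) = ∑ j, ∑ k, M j k * (s j * s k / (s ⬝ᵥ s)) := by
  simp only [dotProduct, mulVec, Finset.mul_sum, Finset.sum_div]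
  exact Finset.sum_congr rfl fun j _ => Finset.sum_congr rfl fun k _ => by ring

lemma integrable_dotProduct_mulVec_div_dotProduct_self [IsFiniteMeasure μ] (M : Matrix ι ι ℝ) :
    Integrable (fun s => s ⬝ᵥ M *ᵥ s / (s ⬝ᵥ s)) (Measure.pi fun _ : ι => μ) := by
  simp only [dotProduct_mulVec_div_dotProduct_self]
  exact integrable_finsetSum _ fun j _ => integrable_finsetSum _ fun k _ =>
    (integrable_mul_div_dotProduct_self μ j k).const_mul _

lemma integral_dotProduct_mulVec_div_dotProduct_self [IsProbabilityMeasure μ] [μ.IsNegInvariant]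
    (h0 : μ {0} = 0) (M : Matrix ι ι ℝ) :
    ∫ s, s ⬝ᵥ M *ᵥ s / (s ⬝ᵥ s) ∂(Measure.pi fun _ => μ) = M.trace / Fintype.card ι := by
  have hint : ∀ j k, Integrable (fun s => M j k * (s j * s k / (s ⬝ᵥ s)))
      (Measure.pi fun _ => μ) := fun j k => (integrable_mul_div_dotProduct_self μ j k).const_mul _
  calc ∫ s, s ⬝ᵥ M *ᵥ s / (s ⬝ᵥ s) ∂(Measure.pi fun _ => μ)
      = ∫ s, ∑ j, ∑ k, M j k * (s j * s k / (s ⬝ᵥ s)) ∂(Measure.pi fun _ => μ) := by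
        simp only [dotProduct_mulVec_div_dotProduct_self]
    _ = ∑ j, ∑ k, M j k * ∫ s, s j * s k / (s ⬝ᵥ s) ∂(Measure.pi fun _ => μ) := by
        refine (integral_finsetSum _ fun j _ => integrable_finsetSum _ fun k _ => hint j k).trans
          (Finset.sum_congr rfl fun j _ => ?_)
        exact (integral_finsetSum _ fun k _ => hint j k).trans
          (Finset.sum_congr rfl fun k _ => integral_const_mul _ _)
    _ = ∑ j, M j j * (Fintype.card ι : ℝ)⁻¹ := by
        refine Finset.sum_congr rfl fun j _ => ?_
        rw [Finset.sum_eq_single j (fun k _ hkj => by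
            rw [integral_mul_div_dotProduct_self_of_ne μ hkj.symm, mul_zero])
          (fun h => absurd (mem_univ j) h), integral_mul_self_div_dotProduct_self μ h0]
    _ = M.trace / Fintype.card ι := by
        rw [Matrix.trace, Finset.sum_div]
        simp only [diag_apply, div_eq_mul_inv]

end SecondMoment

instance isNegInvariant_gaussianReal_zero (v : NNReal) : (gaussianReal 0 v).IsNegInvariant :=
  ⟨(gaussianReal_map_neg (μ := 0)).trans (by rw [neg_zero])⟩

instance isProbabilityMeasure_stdGaussianPi (n : ℕ) : IsProbabilityMeasure (stdGaussianPi n) := by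
  unfold stdGaussianPi
  infer_instance

lemma gaussianReal_singleton_zero : gaussianReal 0 1 {0} = 0 :=
  gaussianReal_absolutelyContinuous 0 one_ne_zero Real.volume_singleton

section Gaussian

variable {n : ℕ} (R : Matrix (Fin n) (Fin n) ℝ)

lemma integrable_frob_sub_mulVec_div_stdGaussianPi :
    Integrable (fun s => frob R - (R *ᵥ s ⬝ᵥ R *ᵥ s) / (s ⬝ᵥ s) / (2 * frob R))
      (stdGaussianPi n) := by
  simp only [dotProduct_mulVec_self_eq]
  exact (integrable_const _).sub
    ((integrable_dotProduct_mulVec_div_dotProduct_self _ _).div_const _)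

lemma integral_frob_sub_mulVec_div_stdGaussianPi :
    ∫ s, frob R - (R *ᵥ s ⬝ᵥ R *ᵥ s) / (s ⬝ᵥ s) / (2 * frob R) ∂(stdGaussianPi n)
      = (1 - 1 / (2 * (n : ℝ))) * frob R := by
  simp only [dotProduct_mulVec_self_eq]
  rw [stdGaussianPi, integral_sub (integrable_const _)
      ((integrable_dotProduct_mulVec_div_dotProduct_self _ _).div_const _),
    integral_div, integral_dotProduct_mulVec_div_dotProduct_self _ gaussianReal_singleton_zero,
    Fintype.card_fin, ← frob_sq_eq_trace]
  rcases eq_or_ne (frob R) 0 with hR | hR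
  · simp [hR]
  · simp only [integral_const, probReal_univ, one_smul]
    field_simp

end Gaussian

theorem stmt_16_general {n : ℕ} (B J A : Matrix (Fin n) (Fin n) ℝ) :
    ∫ v, frob (AAAupd B J v - A) ∂(stdGaussianPi n) ≤
      (1 - 1 / (2 * (n : ℝ))) * frob (B - A) + (2 - 1 / (2 * (n : ℝ))) * frob (J - A) := by
  have hbound := integrable_frob_sub_mulVec_div_stdGaussianPi (J - B)
  have hJB : frob (J - B) ≤ frob (J - A) + frob (B - A) := by
    simpa only [sub_sub_sub_cancel_right] using frob_sub_le (J - A) (B - A)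
  have hc : 1 / (2 * (n : ℝ)) ≤ 1 := by
    simpa using Nat.cast_inv_le_one (α := ℝ) (2 * n)
  calc ∫ v, frob (AAAupd B J v - A) ∂(stdGaussianPi n)
      ≤ ∫ v, frob (J - A) + (frob (J - B) - ((J - B) *ᵥ v ⬝ᵥ (J - B) *ᵥ v) / (v ⬝ᵥ v)
          / (2 * frob (J - B))) ∂(stdGaussianPi n) :=
        integral_mono_of_nonneg (ae_of_all _ fun v => frob_nonneg _)
          ((integrable_const _).add hbound) (ae_of_all _ (frob_AAAupd_sub_le B J A))
    _ = frob (J - A) + (1 - 1 / (2 * (n : ℝ))) * frob (J - B) := by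
        rw [integral_add (integrable_const _) hbound,
          integral_frob_sub_mulVec_div_stdGaussianPi, integral_const, probReal_univ, one_smul]
    _ ≤ _ := by nlinarith

theorem stmt_16 {n : ℕ} (hn : 0 < n) (B J A : Matrix (Fin n) (Fin n) ℝ) :
    ∫ v, frob (AAAupd B J v - A) ∂(stdGaussianPi n) ≤
      (1 - 1 / (2 * (n : ℝ))) * frob (B - A) + (2 - 1 / (2 * (n : ℝ))) * frob (J - A) :=
  stmt_16_general B J A
end
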